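/- arXiv:1808.07558 — 2 statements merged into one kernel-verified Lean document; each statement's English description precedes it below -/
import Mathlib

section
/- Let L be a 2-dimensional linear subspace of ℝ^d and let x, z ∈ ℝ^d and y ∈ L with y ≠ 0. If the segment [0, x|_L] intersects the translated segment y + [0, z|_L] in L, then [0, x|_L] does not intersect the reflected translate -y + [0, z|_L], unless 0 lies on both; in particular, for fixed x and z, the set of y ∈ L for which the segments intersect and the set for which the reflected segments intersect have disjoint interiors, so each occupies at most half of any origin-symmetric region of L. -/
/-!
If `y = s • a - t • b` and `-y = s' • a - t' • b` with `s, t, s', t' ∈ [0, 1]`, eliminating `a`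
gives `(s + s') • y = (s * t' - s' * t) • b`, and `|s * t' - s' * t| ≤ s + s'`. Hence `y = μ • b`
with `μ ∈ [-1, 1]` (when `s = s' = 0` directly `y = -t • b`), so `y` or `-y` lies on `[0, b]`,
i.e. `0` lies on `y + [0, b]` or on `-y + [0, b]`.
-/

open Set

variable {𝕜 E : Type*} [AddCommGroup E]

section OrderedRing

variable [Ring 𝕜] [LinearOrder 𝕜] [IsOrderedRing 𝕜] [Module 𝕜 E]

theorem segment_zero_left_eq_image (b : E) :
    segment 𝕜 0 b = (fun θ : 𝕜 => θ • b) '' Icc 0 1 := by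
  simp only [segment_eq_image', zero_add, sub_zero]

theorem exists_smul_sub_smul_eq_of_inter_image_add_segment_nonempty {a b v : E}
    (h : (segment 𝕜 0 a ∩ (v + ·) '' segment 𝕜 0 b).Nonempty) :
    ∃ s ∈ Icc (0 : 𝕜) 1, ∃ t ∈ Icc (0 : 𝕜) 1, s • a - t • b = v := by
  simp only [segment_zero_left_eq_image, image_image] at h
  obtain ⟨_, ⟨s, hs, rfl⟩, t, ht, hst⟩ := h
  exact ⟨s, hs, t, ht, by beta_reduce at hst; rw [← hst, add_sub_cancel_right]⟩

theorem zero_mem_image_add_segment_or_neg_of_eq_smul {b y : E} {μ : 𝕜} (hμ : μ ∈ Icc (-1 : 𝕜) 1)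
    (hy : y = μ • b) :
    (0 : E) ∈ (y + ·) '' segment 𝕜 0 b ∨ (0 : E) ∈ (-y + ·) '' segment 𝕜 0 b := by
  simp only [segment_zero_left_eq_image, image_image]
  rcases le_total μ 0 with hμ₀ | hμ₀
  · exact Or.inl ⟨-μ, ⟨neg_nonneg.2 hμ₀, neg_le.1 hμ.1⟩, by simp [hy]⟩
  · exact Or.inr ⟨μ, ⟨hμ₀, hμ.2⟩, by simp [hy]⟩

theorem abs_mul_sub_mul_le_add {s t s' t' : 𝕜} (hs : 0 ≤ s) (hs' : 0 ≤ s')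
    (ht : t ∈ Icc (0 : 𝕜) 1) (ht' : t' ∈ Icc (0 : 𝕜) 1) :
    |s * t' - s' * t| ≤ s + s' := by
  calc |s * t' - s' * t| ≤ |s * t'| + |s' * t| := abs_sub _ _
    _ = s * t' + s' * t := by
      rw [abs_of_nonneg (mul_nonneg hs ht'.1), abs_of_nonneg (mul_nonneg hs' ht.1)]
    _ ≤ s + s' := add_le_add (mul_le_of_le_one_right hs ht'.2) (mul_le_of_le_one_right hs' ht.2)

end OrderedRing

theorem exists_mem_Icc_eq_smul_of_smul_sub_smul_eq [Field 𝕜] [LinearOrder 𝕜]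
    [IsStrictOrderedRing 𝕜] [Module 𝕜 E] {a b y : E} {s t s' t' : 𝕜}
    (hs : 0 ≤ s) (hs' : 0 ≤ s') (ht : t ∈ Icc (0 : 𝕜) 1) (ht' : t' ∈ Icc (0 : 𝕜) 1)
    (hy : s • a - t • b = y) (hy' : s' • a - t' • b = -y) :
    ∃ μ ∈ Icc (-1 : 𝕜) 1, y = μ • b := by
  rcases (add_nonneg hs hs').eq_or_lt with hσ | hσ
  · have hs₀ : s = 0 := by linarith
    refine ⟨-t, ⟨by linarith [ht.2], by linarith [ht.1]⟩, ?_⟩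
    rw [← hy, hs₀]
    module
  · have key : (s + s') • y = (s * t' - s' * t) • b := by
      linear_combination (norm := module) s • hy' - s' • hy
    refine ⟨(s * t' - s' * t) / (s + s'), ?_, ?_⟩
    · rw [mem_Icc, ← abs_le, abs_div, abs_of_pos hσ, div_le_one hσ]
      exact abs_mul_sub_mul_le_add hs hs' ht ht'
    · rw [div_eq_inv_mul, mul_smul, ← key, smul_smul, inv_mul_cancel₀ hσ.ne', one_smul]

theorem segment_translate_reflect_not_both_general {d : ℕ}
    (L : Submodule ℝ (EuclideanSpace ℝ (Fin d)))
    (x z : EuclideanSpace ℝ (Fin d)) (y : EuclideanSpace ℝ (Fin d))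
    (h₁ : (segment ℝ 0 (↑(L.orthogonalProjection x)) ∩
        ((y + ·) '' segment ℝ 0 (↑(L.orthogonalProjection z)))).Nonempty)
    (h₂ : (segment ℝ 0 (↑(L.orthogonalProjection x)) ∩
        ((-y + ·) '' segment ℝ 0 (↑(L.orthogonalProjection z)))).Nonempty) :
    (0 : EuclideanSpace ℝ (Fin d)) ∈ (y + ·) '' segment ℝ 0 (↑(L.orthogonalProjection z)) ∨
    (0 : EuclideanSpace ℝ (Fin d)) ∈ (-y + ·) '' segment ℝ 0 (↑(L.orthogonalProjection z)) := by
  obtain ⟨s, hs, t, ht, hy⟩ := exists_smul_sub_smul_eq_of_inter_image_add_segment_nonempty h₁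
  obtain ⟨s', hs', t', ht', hy'⟩ := exists_smul_sub_smul_eq_of_inter_image_add_segment_nonempty h₂
  obtain ⟨μ, hμ, hyμ⟩ := exists_mem_Icc_eq_smul_of_smul_sub_smul_eq hs.1 hs'.1 ht ht' hy hy'
  exact zero_mem_image_add_segment_or_neg_of_eq_smul hμ hyμ

/-- Let `L` be a 2-dimensional linear subspace of `ℝ^d`, `x z ∈ ℝ^d`, and `y ∈ L`, `y ≠ 0`.
If the segment `[0, x|_L]` meets the translate `y + [0, z|_L]` and also meets the reflected
translate `-y + [0, z|_L]`, then `0` must lie on one of the two translated segments (i.e. `0`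
lies on both the base segment and a translate); generically the two intersection events are
mutually exclusive. -/
theorem segment_translate_reflect_not_both {d : ℕ}
    (L : Submodule ℝ (EuclideanSpace ℝ (Fin d)))
    (hL : Module.finrank ℝ L = 2)
    (x z : EuclideanSpace ℝ (Fin d)) (y : EuclideanSpace ℝ (Fin d))
    (hyL : y ∈ L) (hy : y ≠ 0)
    (h₁ : (segment ℝ 0 (↑(L.orthogonalProjection x)) ∩
        ((y + ·) '' segment ℝ 0 (↑(L.orthogonalProjection z)))).Nonempty)
    (h₂ : (segment ℝ 0 (↑(L.orthogonalProjection x)) ∩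
        ((-y + ·) '' segment ℝ 0 (↑(L.orthogonalProjection z)))).Nonempty) :
    (0 : EuclideanSpace ℝ (Fin d)) ∈ (y + ·) '' segment ℝ 0 (↑(L.orthogonalProjection z)) ∨
    (0 : EuclideanSpace ℝ (Fin d)) ∈ (-y + ·) '' segment ℝ 0 (↑(L.orthogonalProjection z)) :=
  segment_translate_reflect_not_both_general L x z y h₁ h₂
end

section
/- Let K ⊂ ℝ^d be a convex body and L a 2-dimensional linear subspace with orthogonal complement L^⊥. Then ∫_{δB_d × K × δB_d} 1([0,x]|_L ∩ (y + [0,z])|_L ≠ ∅) dz dy dx ≤ c_d · δ^{2d+2} · M_{d-2}(K), where M_{d-2}(K) = sup_{u ∈ L} vol_{d-2}((u + L^⊥) ∩ K) is the volume of the maximal (d−2)-dimensional section of K parallel to L^⊥, and c_d = ∫_{B_d × 2B_2 × B_d} 1([0, x|_L] ∩ (y + [0, z|_L]) ≠ ∅) dz dy dx. -/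
open Set MeasureTheory

/-- The constant `c_d` from the unit-scale integral. -/
noncomputable def crossingConst {d : ℕ} (L : Submodule ℝ (EuclideanSpace ℝ (Fin d))) : ENNReal :=
  volume {p : EuclideanSpace ℝ (Fin d) × ↥L × EuclideanSpace ℝ (Fin d) |
    ‖p.1‖ ≤ 1 ∧ ‖p.2.1‖ ≤ 2 ∧ ‖p.2.2‖ ≤ 1 ∧
    (segment ℝ 0 (↑(Submodule.orthogonalProjectionOnto L p.1)) ∩
      ((↑p.2.1 + ·) '' segment ℝ 0 (↑(Submodule.orthogonalProjectionOnto L p.2.2)))).Nonempty}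

/-- `J_L^{(1)}(K, δ)`: the volume of the set of triples
`(x, y, z) ∈ δB_d × K × δB_d` such that `[0,x]|_L` meets `(y + [0,z])|_L`. -/
noncomputable def Jone {d : ℕ} (L : Submodule ℝ (EuclideanSpace ℝ (Fin d)))
    (K : Set (EuclideanSpace ℝ (Fin d))) (δ : ℝ) : ENNReal :=
  volume {p : EuclideanSpace ℝ (Fin d) × EuclideanSpace ℝ (Fin d) × EuclideanSpace ℝ (Fin d) |
    ‖p.1‖ ≤ δ ∧ p.2.1 ∈ K ∧ ‖p.2.2‖ ≤ δ ∧
    (segment ℝ 0 (↑(Submodule.orthogonalProjectionOnto L p.1)) ∩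
      ((↑(Submodule.orthogonalProjectionOnto L p.2.1) + ·) ''
        segment ℝ 0 (↑(Submodule.orthogonalProjectionOnto L p.2.2)))).Nonempty}

/-- The `(d-2)`-volume of the section `(u + L^⊥) ∩ K`, computed in the orthogonal
complement `L^⊥`. -/
noncomputable def sectionVol {d : ℕ} (L : Submodule ℝ (EuclideanSpace ℝ (Fin d)))
    (K : Set (EuclideanSpace ℝ (Fin d))) (u : EuclideanSpace ℝ (Fin d)) : ENNReal :=
  volume {w : ↥Lᗮ | u + ↑w ∈ K}


/-!
Write the middle variable as `y = u + w` with `u ∈ L`, `w ∈ Lᗮ`; this change of variables is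
volume preserving, and the crossing condition only sees `(x, u, z)`. For fixed `(x, u, z)` the
admissible `w` form the section `{w | u + w ∈ K}`, of volume at most `M_{d-2}(K)`, so by Fubini
`J` is at most `M_{d-2}(K)` times the volume of the crossing configurations `(x, u, z)`. A crossing
forces `‖u‖ ≤ 2δ`, so these configurations lie in `δ` times the set defining `c_d`, and volume in
`ℝ^d × L × ℝ^d` scales by `δ^(2d+2)`.
-/

open scoped Pointwise

section SegmentsMeet

variable {V : Type*}

def SegmentsMeet [AddCommGroup V] [Module ℝ V] (a b c : V) : Prop :=
  (segment ℝ 0 a ∩ ((b + ·) '' segment ℝ 0 c)).Nonempty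

theorem segmentsMeet_iff [AddCommGroup V] [Module ℝ V] {a b c : V} :
    SegmentsMeet a b c ↔ ∃ s ∈ Icc (0 : ℝ) 1, ∃ t ∈ Icc (0 : ℝ) 1, s • a = b + t • c := by
  simp only [SegmentsMeet, segment_eq_image, Set.Nonempty, mem_inter_iff, mem_image,
    smul_zero, zero_add]
  constructor
  · rintro ⟨_, ⟨s, hs, rfl⟩, _, ⟨t, ht, rfl⟩, h⟩
    exact ⟨s, hs, t, ht, h.symm⟩
  · rintro ⟨s, hs, t, ht, h⟩
    exact ⟨_, ⟨s, hs, rfl⟩, _, ⟨t, ht, rfl⟩, h.symm⟩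

theorem SegmentsMeet.smul [AddCommGroup V] [Module ℝ V] {a b c : V} (r : ℝ)
    (h : SegmentsMeet a b c) : SegmentsMeet (r • a) (r • b) (r • c) := by
  obtain ⟨s, hs, t, ht, h⟩ := segmentsMeet_iff.mp h
  exact segmentsMeet_iff.mpr ⟨s, hs, t, ht, by rw [smul_comm, h, smul_add, smul_comm t]⟩

theorem SegmentsMeet.norm_le [SeminormedAddCommGroup V] [NormedSpace ℝ V] {a b c : V} {δ : ℝ}
    (h : SegmentsMeet a b c) (ha : ‖a‖ ≤ δ) (hc : ‖c‖ ≤ δ) : ‖b‖ ≤ 2 * δ := by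
  obtain ⟨s, ⟨hs₀, hs₁⟩, t, ⟨ht₀, ht₁⟩, h⟩ := segmentsMeet_iff.mp h
  have hsa : ‖s • a‖ ≤ δ := by
    rw [norm_smul, Real.norm_of_nonneg hs₀]
    exact (mul_le_of_le_one_left (norm_nonneg a) hs₁).trans ha
  have htc : ‖t • c‖ ≤ δ := by
    rw [norm_smul, Real.norm_of_nonneg ht₀]
    exact (mul_le_of_le_one_left (norm_nonneg c) ht₁).trans hc
  calc ‖b‖ = ‖s • a - t • c‖ := by rw [h, add_sub_cancel_right]
    _ ≤ ‖s • a‖ + ‖t • c‖ := norm_sub_le _ _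
    _ ≤ 2 * δ := by linarith

end SegmentsMeet

theorem MeasureTheory.Measure.prod_inter_fst_preimage_le {α β : Type*} [MeasurableSpace α]
    [MeasurableSpace β] (μ : Measure α) (ν : Measure β) (C : Set α) {B : Set (α × β)}
    (hB : MeasurableSet B) {M : ENNReal} (hM : ∀ a, ν (Prod.mk a ⁻¹' B) ≤ M) :
    μ.prod ν (Prod.fst ⁻¹' C ∩ B) ≤ M * μ C := by
  set C' := toMeasurable μ C
  calc μ.prod ν (Prod.fst ⁻¹' C ∩ B) ≤ μ.prod ν (Prod.fst ⁻¹' C' ∩ B) :=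
        measure_mono (inter_subset_inter_left _ (preimage_mono (subset_toMeasurable μ C)))
    _ ≤ ∫⁻ a, ν (Prod.mk a ⁻¹' (Prod.fst ⁻¹' C' ∩ B)) ∂μ :=
        Measure.prod_apply_le
          ((measurableSet_toMeasurable μ C).preimage measurable_fst |>.inter hB)
    _ ≤ ∫⁻ a, C'.indicator (fun _ ↦ M) a ∂μ := by
        refine lintegral_mono fun a ↦ ?_
        by_cases ha : a ∈ C'
        · simpa [ha, preimage_preimage] using hM a
        · simp [ha, preimage_preimage]
    _ ≤ M * μ C' := lintegral_indicator_const_le _ _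
    _ = M * μ C := by rw [measure_toMeasurable]

def MeasurableEquiv.prodProdMidComm (α β γ δ : Type*) [MeasurableSpace α] [MeasurableSpace β]
    [MeasurableSpace γ] [MeasurableSpace δ] : α × (β × γ) × δ ≃ᵐ (α × β × δ) × γ :=
  ((refl α).prodCongr
    (prodAssoc.trans (((refl β).prodCongr prodComm).trans prodAssoc.symm))).trans prodAssoc.symm

theorem MeasureTheory.volume_preserving_prodProdMidComm (α β γ δ : Type*) [MeasureSpace α]
    [MeasureSpace β] [MeasureSpace γ] [MeasureSpace δ] [SFinite (volume : Measure α)]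
    [SFinite (volume : Measure β)] [SFinite (volume : Measure γ)] [SFinite (volume : Measure δ)] :
    MeasurePreserving (MeasurableEquiv.prodProdMidComm α β γ δ) := by
  refine MeasurePreserving.trans ?_ (volume_preserving_prodAssoc.symm _)
  refine (MeasurePreserving.id volume).prod ?_
  refine volume_preserving_prodAssoc.trans
    (MeasurePreserving.trans ?_ (volume_preserving_prodAssoc.symm _))
  exact (MeasurePreserving.id volume).prod Measure.measurePreserving_swap

section OrthogonalSplit

variable {V : Type*} [NormedAddCommGroup V] [InnerProductSpace ℝ V] [FiniteDimensional ℝ V]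
  [MeasurableSpace V] [BorelSpace V] (L : Submodule ℝ V)

noncomputable def Submodule.measurableEquivProdMid : V × V × V ≃ᵐ (V × L × V) × Lᗮ :=
  ((MeasurableEquiv.refl V).prodCongr ((L.measurableEquivProd (0 : V)).prodCongr
    (MeasurableEquiv.refl V))).trans (MeasurableEquiv.prodProdMidComm V L Lᗮ V)

@[simp]
theorem Submodule.measurableEquivProdMid_apply (p : V × V × V) :
    L.measurableEquivProdMid p =
      ((p.1, L.orthogonalProjectionOnto p.2.1, p.2.2), Lᗮ.orthogonalProjectionOnto p.2.1) := by
  simp [measurableEquivProdMid, MeasurableEquiv.prodProdMidComm, MeasurableEquiv.prodCongr,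
    MeasurableEquiv.prodComm, MeasurableEquiv.prodAssoc]

theorem Submodule.measurePreserving_measurableEquivProdMid :
    MeasurePreserving L.measurableEquivProdMid := by
  have hsplit : MeasurePreserving (L.measurableEquivProd (0 : V)) := by
    simpa only [InnerProductSpace.euclideanHausdorffMeasure_eq_volume] using
      L.measurePreserving_measurableEquivProd (0 : V)
  exact ((MeasurePreserving.id _).prod (hsplit.prod (MeasurePreserving.id _))).trans
    (volume_preserving_prodProdMidComm V L Lᗮ V)

end OrthogonalSplit

section CrossingSet

variable {V : Type*} [NormedAddCommGroup V] [InnerProductSpace ℝ V]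

def crossingSet (L : Submodule ℝ V) [L.HasOrthogonalProjection] (δ r : ℝ) : Set (V × L × V) :=
  {p | ‖p.1‖ ≤ δ ∧ ‖p.2.1‖ ≤ r ∧ ‖p.2.2‖ ≤ δ ∧
    SegmentsMeet (L.orthogonalProjectionOnto p.1) p.2.1 (L.orthogonalProjectionOnto p.2.2)}

theorem crossingSet_subset_smul (L : Submodule ℝ V) [L.HasOrthogonalProjection] {c : ℝ}
    (hc : 0 < c) (δ r : ℝ) : crossingSet L (c * δ) (c * r) ⊆ c • crossingSet L δ r := by
  rintro p ⟨hx, hu, hz, hmeet⟩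
  rw [mem_smul_set_iff_inv_smul_mem₀ hc.ne']
  refine ⟨?_, ?_, ?_,
    by simpa only [Prod.smul_fst, Prod.smul_snd, map_smul] using hmeet.smul c⁻¹⟩
    <;> simpa only [Prod.smul_fst, Prod.smul_snd, norm_smul, norm_inv, Real.norm_of_nonneg hc.le,
      inv_mul_le_iff₀ hc]

end CrossingSet

theorem crossingConst_eq_volume {d : ℕ} (L : Submodule ℝ (EuclideanSpace ℝ (Fin d))) :
    crossingConst L = volume (crossingSet L 1 2) :=
  rfl

theorem volume_crossingSet_le {d : ℕ} (L : Submodule ℝ (EuclideanSpace ℝ (Fin d)))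
    (hL : Module.finrank ℝ L = 2) {δ : ℝ} (hδ : 0 < δ) :
    volume (crossingSet L δ (2 * δ)) ≤ crossingConst L * ENNReal.ofReal δ ^ (2 * d + 2) := by
  -- instance search does not unfold `volume` on a product
  have : Measure.IsAddHaarMeasure
      (volume : Measure (EuclideanSpace ℝ (Fin d) × L × EuclideanSpace ℝ (Fin d))) :=
    have := Measure.prod.instIsAddHaarMeasure (volume : Measure L)
      (volume : Measure (EuclideanSpace ℝ (Fin d)))
    Measure.prod.instIsAddHaarMeasure _ _
  calc volume (crossingSet L δ (2 * δ)) ≤ volume (δ • crossingSet L 1 2) :=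
        measure_mono <| by
          simpa only [mul_one, mul_comm δ 2] using crossingSet_subset_smul L hδ 1 2
    _ = crossingConst L * ENNReal.ofReal δ ^ (2 * d + 2) := by
        rw [Measure.addHaar_smul, Module.finrank_prod, Module.finrank_prod, hL,
          finrank_euclideanSpace_fin, abs_of_pos (by positivity), ENNReal.ofReal_pow hδ.le,
          crossingConst_eq_volume, mul_comm]
        ring_nf

theorem Jone_le_general {d : ℕ} (L : Submodule ℝ (EuclideanSpace ℝ (Fin d)))
    (hL : Module.finrank ℝ L = 2)
    (K : Set (EuclideanSpace ℝ (Fin d))) (hKcomp : IsCompact K)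
    (δ : ℝ) (hδ : 0 < δ) :
    Jone L K δ ≤ crossingConst L * ENNReal.ofReal δ ^ (2 * d + 2) *
      ⨆ u : ↥L, sectionVol L K ↑u := by
  set B := {q : (EuclideanSpace ℝ (Fin d) × L × EuclideanSpace ℝ (Fin d)) × Lᗮ |
    (q.1.2.1 : EuclideanSpace ℝ (Fin d)) + q.2 ∈ K}
  have hB : MeasurableSet B := (hKcomp.isClosed.preimage (by fun_prop)).measurableSet
  set T := Prod.fst ⁻¹' crossingSet L δ (2 * δ) ∩ B
  have hJT : Jone L K δ ≤ volume (L.measurableEquivProdMid ⁻¹' T) := by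
    refine measure_mono fun p ⟨hx, hy, hz, hmeet⟩ ↦ ?_
    rw [mem_preimage, L.measurableEquivProdMid_apply]
    refine ⟨⟨hx, ?_, hz, hmeet⟩, by simpa [B] using hy⟩
    exact SegmentsMeet.norm_le hmeet ((L.norm_orthogonalProjectionOnto_apply_le _).trans hx)
      ((L.norm_orthogonalProjectionOnto_apply_le _).trans hz)
  calc Jone L K δ ≤ volume T :=
        hJT.trans_eq (L.measurePreserving_measurableEquivProdMid.measure_preimage_equiv T)
    _ ≤ (⨆ u : ↥L, sectionVol L K ↑u) * volume (crossingSet L δ (2 * δ)) :=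
        Measure.prod_inter_fst_preimage_le _ _ _ hB fun p ↦
          le_iSup (fun u : L ↦ sectionVol L K u) p.2.1
    _ ≤ _ := by
        rw [mul_comm]
        gcongr
        exact volume_crossingSet_le L hL hδ

/-- `J_L^{(1)}(K, δ) ≤ c_d · δ^{2d+2} · M_{d-2}(K)`, where `M_{d-2}(K)` is the volume of
the maximal `(d-2)`-dimensional section of `K` parallel to `L^⊥`. -/
theorem Jone_le {d : ℕ} (L : Submodule ℝ (EuclideanSpace ℝ (Fin d)))
    (hL : Module.finrank ℝ L = 2)
    (K : Set (EuclideanSpace ℝ (Fin d))) (hKconv : Convex ℝ K) (hKcomp : IsCompact K)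
    (hKint : (interior K).Nonempty) (δ : ℝ) (hδ : 0 < δ) :
    Jone L K δ ≤ crossingConst L * ENNReal.ofReal δ ^ (2 * d + 2) *
      ⨆ u : ↥L, sectionVol L K ↑u :=
  Jone_le_general L hL K hKcomp δ hδ
end
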